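/- Let p : ℝⁿ → ℝ be a polynomial of degree d ≥ 1 with p(x) = 0. Then the local flatness of the zero set satisfies θ_{Σ_p}(x,r) ≤ √2 (d−1) ζ_1(p,x,r) for every r > 0. -/

import Mathlib

open MvPolynomial Metric Filter
open scoped ENNReal

/-- Evaluate a multivariate polynomial at a point of Euclidean space. -/
noncomputable def evalPt {n : ℕ} (p : MvPolynomial (Fin n) ℝ)
    (y : EuclideanSpace ℝ (Fin n)) : ℝ :=
  MvPolynomial.eval (fun i => y i) p

/-- The zero set of a polynomial. -/
def zeroSet {n : ℕ} (p : MvPolynomial (Fin n) ℝ) : Set (EuclideanSpace ℝ (Fin n)) :=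
  {y | evalPt p y = 0}

/-- The polynomial y ↦ p(y + x). -/
noncomputable def translatePoly {n : ℕ} (p : MvPolynomial (Fin n) ℝ)
    (x : EuclideanSpace ℝ (Fin n)) : MvPolynomial (Fin n) ℝ :=
  MvPolynomial.bind₁ (fun i => MvPolynomial.X i + MvPolynomial.C (x i)) p

/-- The homogeneous part of degree `k` of `p` centered at `x`. -/
noncomputable def homPart {n : ℕ} (p : MvPolynomial (Fin n) ℝ)
    (x : EuclideanSpace ℝ (Fin n)) (k : ℕ) : MvPolynomial (Fin n) ℝ :=
  MvPolynomial.homogeneousComponent k (translatePoly p x)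

/-- The sup norm of |q| on the closed ball B(0,r), as an extended nonnegative real. -/
noncomputable def supNormBall {n : ℕ} (q : MvPolynomial (Fin n) ℝ) (r : ℝ) : ℝ≥0∞ :=
  ⨆ y ∈ Metric.closedBall (0 : EuclideanSpace ℝ (Fin n)) r, ENNReal.ofReal |evalPt q y|

/-- ζ_k(p,x,r): the relative size of the homogeneous part of degree k of a polynomial of
degree d, centered at x, on the ball of radius r. -/
noncomputable def zeta {n : ℕ} (d : ℕ) (p : MvPolynomial (Fin n) ℝ)
    (x : EuclideanSpace ℝ (Fin n)) (k : ℕ) (r : ℝ) : ℝ≥0∞ :=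
  ⨆ j ∈ (Finset.range (d + 1)).erase k,
    supNormBall (homPart p x j) r / supNormBall (homPart p x k) r

/-- A polynomial is harmonic if its Laplacian vanishes. -/
def IsHarmonic {n : ℕ} (p : MvPolynomial (Fin n) ℝ) : Prop :=
  ∑ i : Fin n, MvPolynomial.pderiv i (MvPolynomial.pderiv i p) = 0

/-- The local flatness θ_Σ(x,r): the normalized minimal Hausdorff distance between
Σ ∩ B(x,r) and (x + L) ∩ B(x,r) over hyperplanes L through the origin. -/
noncomputable def flatness {n : ℕ} (A : Set (EuclideanSpace ℝ (Fin n)))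
    (x : EuclideanSpace ℝ (Fin n)) (r : ℝ) : ℝ :=
  (1 / r) * ⨅ L : {L : Submodule ℝ (EuclideanSpace ℝ (Fin n)) // Module.finrank ℝ L = n - 1},
    Metric.hausdorffDist (A ∩ Metric.closedBall x r)
      (((fun y => x + y) '' (L.1 : Set (EuclideanSpace ℝ (Fin n)))) ∩ Metric.closedBall x r)

/-- Dp(x) ≠ 0 : some partial derivative of p is nonzero at x. -/
def gradNeZero {n : ℕ} (p : MvPolynomial (Fin n) ℝ) (x : EuclideanSpace ℝ (Fin n)) : Prop :=
  ∃ i : Fin n, MvPolynomial.eval (fun j => x j) (MvPolynomial.pderiv i p) ≠ 0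

/-- Sup of |h| on the unit sphere. -/
noncomputable def sphereSup {n : ℕ} (h : MvPolynomial (Fin n) ℝ) : ℝ :=
  sSup ((fun θ => |evalPt h θ|) '' Metric.sphere (0 : EuclideanSpace ℝ (Fin n)) 1)

/-- The polynomial y ↦ p(t·y). -/
noncomputable def dilatePoly {n : ℕ} (p : MvPolynomial (Fin n) ℝ) (t : ℝ) :
    MvPolynomial (Fin n) ℝ :=
  MvPolynomial.bind₁ (fun i => MvPolynomial.C t * MvPolynomial.X i) p

/-!
Centered at `x`, `p(x + y) = ⟪a, y⟫ + R(y)` with `a = ∇p(x)`: the constant part vanishes since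
`p(x) = 0`, and `R` is the sum of the `d - 1` homogeneous parts of degree `≥ 2`, each bounded on
`B(0, r)` by `ζ` times the sup of `|⟪a, ·⟫|`, i.e. by `ζ ‖a‖ r`. So `|p(x + y) - ⟪a, y⟫| ≤ ‖a‖ δ`
with `δ = (d - 1) ζ r`. Then every zero in `B(x, r)` is within `δ` of its orthogonal projection
onto `x + a^⊥`, and every point `x + v` of the hyperplane slice is within `√2 δ` of a zero: shrink
`v` by the factor `1 - δ / r`, then `p` changes sign along the normal segment of half-length `δ`.
Here `a ≠ 0` unless `ζ = ∞`, because a nonzero homogeneous polynomial does not vanish on a ball.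
-/

open scoped RealInnerProductSpace

section ApproximatelyLinear

variable {E : Type*} [NormedAddCommGroup E] [InnerProductSpace ℝ E]
  {f : E → ℝ} {x e : E} {c r δ : ℝ}

lemma exists_mem_hyperplane_dist_le (hc : 0 < c) (he : ‖e‖ = 1)
    (hf : ∀ y, ‖y‖ ≤ r → |f (x + y) - c * ⟪e, y⟫| ≤ c * δ)
    {z : E} (hz : f z = 0) (hzx : z ∈ closedBall x r) :
    ∃ w ∈ (fun y => x + y) '' ((ℝ ∙ e)ᗮ : Set E) ∩ closedBall x r, dist z w ≤ δ := by
  have hy : ‖z - x‖ ≤ r := by rwa [mem_closedBall, dist_eq_norm] at hzx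
  have hey : |⟪e, z - x⟫| ≤ δ := by
    have := hf (z - x) hy
    rw [add_sub_cancel, hz, zero_sub, abs_neg, abs_mul, abs_of_pos hc] at this
    exact le_of_mul_le_mul_left this hc
  refine ⟨x + (ℝ ∙ e)ᗮ.starProjection (z - x),
    ⟨⟨_, (ℝ ∙ e)ᗮ.starProjection_apply_mem _, rfl⟩, ?_⟩, ?_⟩
  · rw [mem_closedBall, dist_eq_norm, add_sub_cancel_left]
    exact (Submodule.norm_starProjection_apply_le _ _).trans hy
  · rw [dist_eq_norm, ← sub_sub, Submodule.starProjection_orthogonal_val, sub_sub_cancel,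
      Submodule.starProjection_unit_singleton ℝ he, norm_smul, he, mul_one, Real.norm_eq_abs]
    exact hey

lemma exists_zero_on_normal_segment (hf_cont : Continuous f) (he : ‖e‖ = 1)
    (hr : 0 ≤ r) (hδ : 0 ≤ δ) (hf : ∀ y, ‖y‖ ≤ r → |f (x + y) - c * ⟪e, y⟫| ≤ c * δ)
    {w : E} (hw : w ∈ (ℝ ∙ e)ᗮ) (hwr : ‖w‖ ^ 2 + δ ^ 2 ≤ r ^ 2) :
    ∃ t, |t| ≤ δ ∧ ‖w + t • e‖ ≤ r ∧ f (x + (w + t • e)) = 0 := by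
  have hwe : ⟪w, e⟫ = 0 := Submodule.mem_orthogonal_singleton_iff_inner_left.1 hw
  have hnorm : ∀ t, |t| ≤ δ → ‖w + t • e‖ ≤ r := fun t ht => by
    have hpyth : ‖w + t • e‖ ^ 2 = ‖w‖ ^ 2 + t ^ 2 := by
      rw [sq, sq, sq, norm_add_sq_eq_norm_sq_add_norm_sq_real (by rw [real_inner_smul_right, hwe,
        mul_zero]), norm_smul, he, mul_one, Real.norm_eq_abs, abs_mul_abs_self]
    refine abs_le_of_sq_le_sq' ?_ hr |>.2
    nlinarith [sq_abs t, abs_nonneg t]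
  have hlin : ∀ t, ⟪e, w + t • e⟫ = t := fun t => by
    rw [inner_add_right, real_inner_comm, hwe, real_inner_smul_right,
      real_inner_self_eq_norm_sq, he]; ring
  have hleft : f (x + (w + (-δ) • e)) ≤ 0 := by
    have := abs_le.1 (hf _ (hnorm (-δ) (by rw [abs_neg, abs_of_nonneg hδ])))
    rw [hlin] at this; linarith
  have hright : 0 ≤ f (x + (w + δ • e)) := by
    have := abs_le.1 (hf _ (hnorm δ (by rw [abs_of_nonneg hδ])))
    rw [hlin] at this; linarith
  obtain ⟨t, ht, hft⟩ := intermediate_value_Icc (by linarith : -δ ≤ δ)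
    (by fun_prop : Continuous fun t : ℝ => f (x + (w + t • e))).continuousOn ⟨hleft, hright⟩
  exact ⟨t, abs_le.2 ht, hnorm t (abs_le.2 ht), hft⟩

lemma exists_zero_dist_le (hf_cont : Continuous f) (he : ‖e‖ = 1)
    (hfx : f x = 0) (hr : 0 < r) (hδ : 0 ≤ δ)
    (hf : ∀ y, ‖y‖ ≤ r → |f (x + y) - c * ⟪e, y⟫| ≤ c * δ)
    {v : E} (hv : v ∈ (ℝ ∙ e)ᗮ) (hvr : ‖v‖ ≤ r) :
    ∃ z ∈ {z | f z = 0} ∩ closedBall x r, dist (x + v) z ≤ √2 * δ := by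
  rcases lt_or_ge r δ with hrδ | hδr
  · refine ⟨x, ⟨hfx, mem_closedBall_self hr.le⟩, ?_⟩
    rw [dist_eq_norm, add_sub_cancel_left]
    nlinarith [Real.one_lt_sqrt_two]
  set v' := (1 - δ / r) • v
  have hfac : 0 ≤ 1 - δ / r := by rw [sub_nonneg, div_le_one hr]; exact hδr
  have hv' : v' ∈ (ℝ ∙ e)ᗮ := Submodule.smul_mem _ _ hv
  have hv'r : ‖v'‖ ^ 2 + δ ^ 2 ≤ r ^ 2 := by
    have : ‖v'‖ ≤ r - δ := by
      rw [norm_smul, Real.norm_of_nonneg hfac]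
      calc (1 - δ / r) * ‖v‖ ≤ (1 - δ / r) * r := by gcongr
        _ = r - δ := by field_simp
    nlinarith [norm_nonneg v']
  have hvv' : ‖v - v'‖ ≤ δ := by
    rw [show v - v' = (δ / r) • v by simp only [v', sub_smul, one_smul, sub_sub_cancel],
      norm_smul, Real.norm_of_nonneg (by positivity)]
    calc δ / r * ‖v‖ ≤ δ / r * r := by gcongr
      _ = δ := by field_simp
  obtain ⟨t, ht, htr, hft⟩ := exists_zero_on_normal_segment hf_cont he hr.le hδ hf hv' hv'r
  refine ⟨x + (v' + t • e), ⟨hft, ?_⟩, ?_⟩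
  · rwa [mem_closedBall, dist_eq_norm, add_sub_cancel_left]
  · have horth : ⟪v - v', t • e⟫ = 0 := by
      rw [real_inner_smul_right, Submodule.mem_orthogonal_singleton_iff_inner_left.1
        (Submodule.sub_mem _ hv hv'), mul_zero]
    have hpyth : ‖v - v' - t • e‖ ^ 2 = ‖v - v'‖ ^ 2 + t ^ 2 := by
      rw [sq, sq, sq, norm_sub_sq_eq_norm_sq_add_norm_sq_real horth, norm_smul, he, mul_one,
        Real.norm_eq_abs, abs_mul_abs_self]
    rw [dist_eq_norm, show x + v - (x + (v' + t • e)) = v - v' - t • e by abel]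
    refine abs_le_of_sq_le_sq' ?_ (by positivity) |>.2
    rw [hpyth, mul_pow, Real.sq_sqrt zero_le_two]
    nlinarith [sq_abs t, abs_nonneg t, norm_nonneg (v - v')]

lemma hausdorffDist_zeroSet_hyperplane_le (hf_cont : Continuous f) (hc : 0 < c) (he : ‖e‖ = 1)
    (hfx : f x = 0) (hr : 0 < r) (hδ : 0 ≤ δ)
    (hf : ∀ y, ‖y‖ ≤ r → |f (x + y) - c * ⟪e, y⟫| ≤ c * δ) :
    hausdorffDist ({z | f z = 0} ∩ closedBall x r)
      ((fun y => x + y) '' ((ℝ ∙ e)ᗮ : Set E) ∩ closedBall x r) ≤ √2 * δ := by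
  refine hausdorffDist_le_of_mem_dist (by positivity) (fun z ⟨hz, hzx⟩ => ?_) ?_
  · obtain ⟨w, hw, hzw⟩ := exists_mem_hyperplane_dist_le hc he hf hz hzx
    exact ⟨w, hw, hzw.trans (le_mul_of_one_le_left hδ Real.one_lt_sqrt_two.le)⟩
  · rintro _ ⟨⟨v, hv, rfl⟩, hvx⟩
    rw [mem_closedBall, dist_eq_norm, add_sub_cancel_left] at hvx
    exact exists_zero_dist_le hf_cont he hfx hr hδ hf hv hvx

end ApproximatelyLinear

lemma flatness_le_of_hausdorffDist_le {n : ℕ} {A : Set (EuclideanSpace ℝ (Fin n))}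
    {x : EuclideanSpace ℝ (Fin n)} {r δ : ℝ} (hr : 0 < r)
    {L : Submodule ℝ (EuclideanSpace ℝ (Fin n))} (hL : Module.finrank ℝ L = n - 1)
    (h : hausdorffDist (A ∩ closedBall x r)
      ((fun y => x + y) '' (L : Set (EuclideanSpace ℝ (Fin n))) ∩ closedBall x r) ≤ δ) :
    flatness A x r ≤ δ / r := by
  rw [flatness, one_div_mul_eq_div]
  gcongr
  exact ciInf_le_of_le ⟨0, by rintro _ ⟨_, rfl⟩; exact hausdorffDist_nonneg⟩ ⟨L, hL⟩ h

lemma EuclideanSpace.finrank_orthogonal_span_singleton {n : ℕ} {e : EuclideanSpace ℝ (Fin n)}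
    (he : e ≠ 0) : Module.finrank ℝ (ℝ ∙ e)ᗮ = n - 1 := by
  have := Submodule.finrank_add_finrank_orthogonal (ℝ ∙ e)
  rw [finrank_span_singleton he, finrank_euclideanSpace_fin] at this
  omega

lemma MvPolynomial.IsHomogeneous.eval_smul {σ R : Type*} [CommSemiring R]
    {φ : MvPolynomial σ R} {k : ℕ} (hφ : φ.IsHomogeneous k) (t : R) (y : σ → R) :
    eval (t • y) φ = t ^ k * eval y φ := by
  rw [eval_eq, eval_eq, Finset.mul_sum]
  refine Finset.sum_congr rfl fun m hm => ?_
  have hdeg : ∑ i ∈ m.support, m i = k := by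
    rw [← hφ (mem_support_iff.1 hm), Finsupp.weight_apply, Finsupp.sum]
    simp
  simp only [Pi.smul_apply, smul_eq_mul, mul_pow, Finset.prod_mul_distrib,
    Finset.prod_pow_eq_pow_sum, hdeg]
  ring

lemma MvPolynomial.totalDegree_bind₁_le {σ τ R : Type*} [CommSemiring R]
    {f : σ → MvPolynomial τ R} (hf : ∀ i, (f i).totalDegree ≤ 1) (p : MvPolynomial σ R) :
    (bind₁ f p).totalDegree ≤ p.totalDegree := by
  conv_lhs => rw [p.as_sum, map_sum]
  refine totalDegree_finsetSum_le fun m hm => ?_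
  rw [bind₁_monomial]
  calc (C (coeff m p) * ∏ i ∈ m.support, f i ^ m i).totalDegree
      ≤ ∑ i ∈ m.support, (f i ^ m i).totalDegree := by
        grw [totalDegree_mul, totalDegree_C, zero_add, totalDegree_finsetProd]
    _ ≤ ∑ i ∈ m.support, m i := Finset.sum_le_sum fun i _ =>
        (totalDegree_pow _ _).trans (by simpa using Nat.mul_le_mul_left (m i) (hf i))
    _ ≤ p.totalDegree := le_totalDegree hm

section Polynomial

variable {n : ℕ}

lemma continuous_evalPt (p : MvPolynomial (Fin n) ℝ) : Continuous (evalPt p) :=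
  (continuous_eval p).comp (PiLp.continuous_ofLp 2 _)

lemma evalPt_translatePoly (p : MvPolynomial (Fin n) ℝ) (x y : EuclideanSpace ℝ (Fin n)) :
    evalPt (translatePoly p x) y = evalPt p (x + y) := by
  change eval₂Hom _ _ (bind₁ _ p) = _
  rw [eval₂Hom_bind₁]
  congr 2 with i
  simp [add_comm]

lemma totalDegree_translatePoly_le (p : MvPolynomial (Fin n) ℝ) (x : EuclideanSpace ℝ (Fin n)) :
    (translatePoly p x).totalDegree ≤ p.totalDegree :=
  totalDegree_bind₁_le (fun i => (totalDegree_add _ _).trans (by simp)) p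

lemma translatePoly_ne_zero {p : MvPolynomial (Fin n) ℝ} (hp : p ≠ 0)
    (x : EuclideanSpace ℝ (Fin n)) : translatePoly p x ≠ 0 := by
  refine fun h => hp (funext fun z => ?_)
  have := evalPt_translatePoly p x (WithLp.toLp 2 z - x)
  rw [h, add_sub_cancel] at this
  simpa [evalPt] using this.symm

lemma sum_homPart {p : MvPolynomial (Fin n) ℝ} {d : ℕ} (hd : p.totalDegree ≤ d)
    (x : EuclideanSpace ℝ (Fin n)) :
    ∑ j ∈ Finset.range (d + 1), homPart p x j = translatePoly p x := by
  rw [← sum_homogeneousComponent (translatePoly p x)]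
  refine (Finset.sum_subset (Finset.range_subset_range.2 ?_) fun j _ hj => ?_).symm
  · have := totalDegree_translatePoly_le p x
    omega
  · refine homogeneousComponent_eq_zero j _ ?_
    have := totalDegree_translatePoly_le p x
    simp only [Finset.mem_range] at hj
    omega

lemma evalPt_add_eq_sum_homPart {p : MvPolynomial (Fin n) ℝ} {d : ℕ} (hd : p.totalDegree ≤ d)
    (x y : EuclideanSpace ℝ (Fin n)) :
    evalPt p (x + y) = ∑ j ∈ Finset.range (d + 1), evalPt (homPart p x j) y := by
  rw [← evalPt_translatePoly, ← sum_homPart hd, evalPt, map_sum]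
  rfl

lemma evalPt_homPart_zero (p : MvPolynomial (Fin n) ℝ) (x y : EuclideanSpace ℝ (Fin n)) :
    evalPt (homPart p x 0) y = evalPt p x := by
  rw [homPart, homogeneousComponent_zero, evalPt, eval_C, ← add_zero x, ← evalPt_translatePoly]
  simp [evalPt, constantCoeff_eq]

lemma exists_homPart_ne_zero {p : MvPolynomial (Fin n) ℝ} (hp : p ≠ 0) {d : ℕ}
    (hd : p.totalDegree ≤ d) (x : EuclideanSpace ℝ (Fin n)) :
    ∃ j ∈ Finset.range (d + 1), homPart p x j ≠ 0 := by
  by_contra! h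
  exact translatePoly_ne_zero hp x (by rw [← sum_homPart hd, Finset.sum_eq_zero h])

lemma exists_evalPt_eq_inner {h : MvPolynomial (Fin n) ℝ} (hh : h.IsHomogeneous 1) :
    ∃ a : EuclideanSpace ℝ (Fin n), ∀ y, evalPt h y = ⟪a, y⟫ := by
  rw [← mem_homogeneousSubmodule, homogeneousSubmodule_one_eq_span_X,
    Submodule.mem_span_range_iff_exists_fun] at hh
  obtain ⟨a, rfl⟩ := hh
  refine ⟨WithLp.toLp 2 a, fun y => ?_⟩
  simp [evalPt, PiLp.inner_apply, mul_comm]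

lemma exists_mem_closedBall_evalPt_ne_zero {h : MvPolynomial (Fin n) ℝ} {k : ℕ}
    (hh : h.IsHomogeneous k) (h0 : h ≠ 0) {r : ℝ} (hr : 0 < r) :
    ∃ y ∈ closedBall (0 : EuclideanSpace ℝ (Fin n)) r, evalPt h y ≠ 0 := by
  obtain ⟨y, hy⟩ : ∃ y : Fin n → ℝ, eval y h ≠ 0 := by
    by_contra! hall
    exact h0 (funext fun y => by simpa using hall y)
  set t := r / (‖WithLp.toLp 2 y‖ + 1)
  have ht : 0 < t := by positivity
  refine ⟨t • WithLp.toLp 2 y, ?_, ?_⟩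
  · rw [mem_closedBall, dist_zero_right, norm_smul, Real.norm_of_nonneg ht.le, div_mul_eq_mul_div,
      div_le_iff₀ (by positivity)]
    nlinarith [norm_nonneg (WithLp.toLp 2 y)]
  · rw [evalPt, show (fun i => (t • WithLp.toLp 2 y) i) = t • y from rfl, hh.eval_smul]
    exact mul_ne_zero (pow_ne_zero _ ht.ne') hy

lemma ofReal_abs_evalPt_le_supNormBall (q : MvPolynomial (Fin n) ℝ) {r : ℝ}
    {y : EuclideanSpace ℝ (Fin n)} (hy : y ∈ closedBall 0 r) :
    ENNReal.ofReal |evalPt q y| ≤ supNormBall q r :=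
  le_iSup₂_of_le y hy le_rfl

lemma supNormBall_le_ofReal {q : MvPolynomial (Fin n) ℝ} {r M : ℝ}
    (h : ∀ y ∈ closedBall (0 : EuclideanSpace ℝ (Fin n)) r, |evalPt q y| ≤ M) :
    supNormBall q r ≤ ENNReal.ofReal M :=
  iSup₂_le fun y hy => ENNReal.ofReal_le_ofReal (h y hy)

lemma supNormBall_ne_zero {h : MvPolynomial (Fin n) ℝ} {k : ℕ} (hh : h.IsHomogeneous k)
    (h0 : h ≠ 0) {r : ℝ} (hr : 0 < r) : supNormBall h r ≠ 0 := by
  obtain ⟨y, hy, hyh⟩ := exists_mem_closedBall_evalPt_ne_zero hh h0 hr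
  exact (ENNReal.ofReal_pos.2 (abs_pos.2 hyh)).trans_le
    (ofReal_abs_evalPt_le_supNormBall h hy) |>.ne'

lemma zeta_eq_top_of_supNormBall_eq_zero {p : MvPolynomial (Fin n) ℝ} (hp : p ≠ 0) {d : ℕ}
    (hd : p.totalDegree ≤ d) (x : EuclideanSpace ℝ (Fin n)) {k : ℕ} {r : ℝ} (hr : 0 < r)
    (hk : supNormBall (homPart p x k) r = 0) : zeta d p x k r = ⊤ := by
  obtain ⟨j, hj, hj0⟩ := exists_homPart_ne_zero hp hd x
  have hsup : supNormBall (homPart p x j) r ≠ 0 :=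
    supNormBall_ne_zero (homogeneousComponent_isHomogeneous j _) hj0 hr
  have hjk : j ≠ k := by rintro rfl; exact hsup hk
  refine top_le_iff.1 (le_iSup₂_of_le j (Finset.mem_erase.2 ⟨hjk, hj⟩) ?_)
  rw [hk, ENNReal.div_zero hsup]

lemma abs_evalPt_homPart_le {p : MvPolynomial (Fin n) ℝ} {d : ℕ} {x : EuclideanSpace ℝ (Fin n)}
    {j k : ℕ} {r M : ℝ} (hj : j ∈ (Finset.range (d + 1)).erase k) (hζ : zeta d p x k r ≠ ⊤)
    (hM : supNormBall (homPart p x k) r ≤ ENNReal.ofReal M) (hM0 : 0 ≤ M)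
    {y : EuclideanSpace ℝ (Fin n)} (hy : y ∈ closedBall 0 r) :
    |evalPt (homPart p x j) y| ≤ (zeta d p x k r).toReal * M := by
  have hratio : supNormBall (homPart p x j) r / supNormBall (homPart p x k) r ≤ zeta d p x k r :=
    le_iSup₂_of_le j hj le_rfl
  have hjk := (ENNReal.div_le_iff_le_mul (Or.inr hζ)
    (Or.inl (ne_top_of_le_ne_top ENNReal.ofReal_ne_top hM))).1 hratio
  rw [← ENNReal.ofReal_le_ofReal_iff (by positivity), ENNReal.ofReal_mul ENNReal.toReal_nonneg,
    ENNReal.ofReal_toReal hζ]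
  calc ENNReal.ofReal |evalPt (homPart p x j) y| ≤ supNormBall (homPart p x j) r :=
        ofReal_abs_evalPt_le_supNormBall _ hy
    _ ≤ zeta d p x k r * supNormBall (homPart p x k) r := hjk
    _ ≤ zeta d p x k r * ENNReal.ofReal M := by gcongr

lemma zeta_one_one_eq_zero {p : MvPolynomial (Fin n) ℝ} {x : EuclideanSpace ℝ (Fin n)}
    (hx : evalPt p x = 0) (r : ℝ) : zeta 1 p x 1 r = 0 := by
  have h0 : supNormBall (homPart p x 0) r = 0 :=
    le_antisymm ((supNormBall_le_ofReal fun y _ => by rw [evalPt_homPart_zero, hx, abs_zero]).trans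
      ENNReal.ofReal_zero.le) zero_le
  refine le_antisymm (iSup₂_le fun j hj => ?_) zero_le
  obtain rfl : j = 0 := by simp only [Finset.mem_erase, Finset.mem_range] at hj; omega
  rw [h0, ENNReal.zero_div]

lemma abs_evalPt_add_sub_inner_le {p : MvPolynomial (Fin n) ℝ} {m : ℕ}
    (hdeg : p.totalDegree ≤ m + 1) {x : EuclideanSpace ℝ (Fin n)} (hx : evalPt p x = 0)
    {a : EuclideanSpace ℝ (Fin n)} (ha : ∀ y, evalPt (homPart p x 1) y = ⟪a, y⟫) {r : ℝ}
    (hr : 0 ≤ r) (hζ : zeta (m + 1) p x 1 r ≠ ⊤) {y : EuclideanSpace ℝ (Fin n)} (hy : ‖y‖ ≤ r) :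
    |evalPt p (x + y) - ⟪a, y⟫| ≤ ‖a‖ * (m * (zeta (m + 1) p x 1 r).toReal * r) := by
  have h1 : supNormBall (homPart p x 1) r ≤ ENNReal.ofReal (‖a‖ * r) :=
    supNormBall_le_ofReal fun z hz => by
      rw [ha]
      exact (abs_real_inner_le_norm a z).trans (by gcongr; simpa using hz)
  have hy' : y ∈ closedBall 0 r := by simpa using hy
  rw [evalPt_add_eq_sum_homPart hdeg, Finset.sum_range_succ', Finset.sum_range_succ',
    evalPt_homPart_zero, hx, ha, add_zero, add_sub_cancel_right]
  calc |∑ i ∈ Finset.range m, evalPt (homPart p x (i + 1 + 1)) y|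
      ≤ ∑ i ∈ Finset.range m, |evalPt (homPart p x (i + 1 + 1)) y| :=
        Finset.abs_sum_le_sum_abs _ _
    _ ≤ ∑ i ∈ Finset.range m, (zeta (m + 1) p x 1 r).toReal * (‖a‖ * r) :=
        Finset.sum_le_sum fun i hi => abs_evalPt_homPart_le
          (by simp only [Finset.mem_erase, Finset.mem_range] at hi ⊢; omega) hζ h1
          (by positivity) hy'
    _ = ‖a‖ * (m * (zeta (m + 1) p x 1 r).toReal * r) := by
        rw [Finset.sum_const, Finset.card_range, nsmul_eq_mul]; ring

end Polynomial

/-- The relative size of the linear term controls local flatness of the zero set: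
θ_{Σ_p}(x,r) ≤ √2 (d−1) ζ_1(p,x,r). -/
theorem flatness_le_zeta {n : ℕ} (p : MvPolynomial (Fin n) ℝ) (d : ℕ) (hd : 1 ≤ d)
    (hdeg : p.totalDegree = d) (x : EuclideanSpace ℝ (Fin n)) (hx : evalPt p x = 0) :
    ∀ r > (0 : ℝ), ENNReal.ofReal (flatness (zeroSet p) x r)
      ≤ ENNReal.ofReal (Real.sqrt 2 * ((d : ℝ) - 1)) * zeta d p x 1 r := by
  intro r hr
  obtain ⟨m, rfl⟩ : ∃ m, d = m + 1 := ⟨d - 1, by omega⟩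
  rw [Nat.cast_succ, add_sub_cancel_right]
  by_cases hζ : zeta (m + 1) p x 1 r = ⊤
  · rcases m with _ | m
    · exact absurd hζ (by simp [zeta_one_one_eq_zero hx])
    · rw [hζ, ENNReal.mul_top (by simp; positivity)]
      exact le_top
  have hp : p ≠ 0 := by rintro rfl; simp at hdeg
  obtain ⟨a, ha⟩ :=
    exists_evalPt_eq_inner (homogeneousComponent_isHomogeneous 1 (translatePoly p x))
  have ha0 : a ≠ 0 := by
    rintro rfl
    refine hζ (zeta_eq_top_of_supNormBall_eq_zero hp hdeg.le x hr (le_antisymm ?_ zero_le))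
    simpa using supNormBall_le_ofReal (r := r) (M := 0) fun y _ => by simp [homPart, ha]
  have hae : ∀ y, ⟪a, y⟫ = ‖a‖ * ⟪‖a‖⁻¹ • a, y⟫ := fun y => by
    rw [real_inner_smul_left, mul_inv_cancel_left₀ (norm_ne_zero_iff.2 ha0)]
  have hH := hausdorffDist_zeroSet_hyperplane_le (continuous_evalPt p) (norm_pos_iff.2 ha0)
    (norm_smul_inv_norm ha0) hx hr (by positivity)
    fun y hy => hae y ▸ abs_evalPt_add_sub_inner_le hdeg.le hx ha hr.le hζ hy
  have hflat := flatness_le_of_hausdorffDist_le (A := zeroSet p) hr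
    (EuclideanSpace.finrank_orthogonal_span_singleton (by simpa using ha0)) hH
  calc ENNReal.ofReal (flatness (zeroSet p) x r)
      ≤ ENNReal.ofReal (√2 * m * (zeta (m + 1) p x 1 r).toReal) := by
        gcongr; convert hflat using 1; field_simp
    _ = ENNReal.ofReal (√2 * m) * ENNReal.ofReal (zeta (m + 1) p x 1 r).toReal :=
        ENNReal.ofReal_mul (by positivity)
    _ ≤ _ := by gcongr; exact ENNReal.ofReal_toReal_le
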